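/- For every h₁ > 0 and every k ∈ ℕ there exists a constant C_k > 0, depending only on k and h₁, such that for all real h ≥ h₁ and all positive integers j, j' one has |∂_h^k ( (j·tanh(h·j))^{1/2} − (j'·tanh(h·j'))^{1/2} )| ≤ C_k · |√j − √j'|. -/

import Mathlib

/-!
Write `ω_c(t) = √(c tanh(tc))`. Since `1 - √x = (1 - x²) / ((1 + √x)(1 + x))`, the defect
`ω_c(t) - √c` equals `-√c · sech²(tc) · F(tanh(tc))` with `F` smooth on `(0, ∞)`. Functions of the
form `sech²(tc) · F(tanh(tc))` are stable under `∂_t`, each derivative costing a factor `c`, so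
`∂_t^k (ω_c - √c)` is `√c c^k sech²(tc)` times a function of `tanh(tc)`. For `t ≥ h₁` and `c ≥ 1`,
`tanh(tc)` ranges over the compact `[tanh h₁, 1] ⊂ (0, ∞)` and `sech²(tc) ≤ 4 e^{-2h₁c}`, so every
derivative of the defect is `O(c^{-1/2})`. Finally `|√j - √j'| ≥ 1/(3√j)` for distinct positive
integers, while the constants `√j`, `√j'` contribute only to the zeroth derivative.
-/

open Real Set Filter Topology
open scoped ContDiff Nat

namespace Real

theorem pow_mul_exp_neg_mul_le (n : ℕ) {b x : ℝ} (hb : 0 < b) (hx : 0 ≤ x) :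
    x ^ n * exp (-(b * x)) ≤ n ! / b ^ n := by
  have := pow_div_factorial_le_exp (x := b * x) (mul_nonneg hb.le hx) n
  rw [exp_neg, ← div_eq_mul_inv, div_le_div_iff₀ (exp_pos _) (by positivity)]
  rw [div_le_iff₀ (by positivity), mul_pow] at this
  nlinarith

theorem contDiff_tanh {n : WithTop ℕ∞} : ContDiff ℝ n tanh := by
  rw [show tanh = fun x => sinh x / cosh x from funext tanh_eq_sinh_div_cosh]
  exact contDiff_sinh.div contDiff_cosh fun x => (cosh_pos x).ne'

theorem hasDerivAt_tanh (x : ℝ) : HasDerivAt tanh (1 - tanh x ^ 2) x := by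
  have h := (hasDerivAt_sinh x).div (hasDerivAt_cosh x) (cosh_pos x).ne'
  rw [show sinh / cosh = tanh from funext fun y => (tanh_eq_sinh_div_cosh y).symm] at h
  refine h.congr_deriv ?_
  rw [tanh_eq_sinh_div_cosh]
  field_simp

theorem tanh_strictMono : StrictMono tanh :=
  strictMono_of_hasDerivAt_pos hasDerivAt_tanh fun x => sub_pos.2 (tanh_sq_lt_one x)

theorem tanh_pos {x : ℝ} (hx : 0 < x) : 0 < tanh x := by
  simpa using tanh_strictMono hx

theorem one_sub_tanh_sq_le (x : ℝ) : 1 - tanh x ^ 2 ≤ 4 * exp (-(2 * x)) := by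
  have hsq : 1 - tanh x ^ 2 = (cosh x ^ 2)⁻¹ := by
    rw [tanh_eq_sinh_div_cosh]
    field_simp
    linarith [cosh_sq_sub_sinh_sq x]
  calc 1 - tanh x ^ 2 = (cosh x ^ 2)⁻¹ := hsq
    _ ≤ ((exp x / 2) ^ 2)⁻¹ := by gcongr; rw [cosh_eq]; linarith [exp_pos (-x)]
    _ = 4 * exp (-(2 * x)) := by
        rw [show -(2 * x) = -x + -x by ring, exp_add, exp_neg]
        field_simp
        ring

end Real

theorem inv_sqrt_le_three_mul_abs_sqrt_sub {m n : ℕ} (hm : 1 ≤ m) (hmn : m ≠ n) :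
    (√m)⁻¹ ≤ 3 * |√m - √n| := by
  have hm1 : 1 ≤ √(m : ℝ) := one_le_sqrt.2 (by exact_mod_cast hm)
  have hprod : 1 ≤ |√m - √n| * (√m + √n) := by
    rw [← abs_of_nonneg (by positivity : 0 ≤ √(m : ℝ) + √n), ← abs_mul,
      show (√m - √n) * (√m + √n) = (m : ℝ) - n by
        linear_combination sq_sqrt (Nat.cast_nonneg (α := ℝ) m) - sq_sqrt (Nat.cast_nonneg n)]
    have : (m : ℤ) ≠ n := by exact_mod_cast hmn
    have := Int.one_le_abs (sub_ne_zero.2 this)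
    exact_mod_cast this
  rw [inv_le_iff_one_le_mul₀ (by positivity)]
  -- either `√m + √n ≤ 3√m`, or `√n` is so large that `|√m - √n| ≥ √m ≥ 1`
  rcases le_or_gt (√(n : ℝ)) (2 * √m) with hn | hn
  · nlinarith [abs_nonneg (√(m : ℝ) - √n)]
  · have : √(m : ℝ) ≤ |√m - √n| := by
      rw [abs_sub_comm]; exact (le_abs_self _).trans' (by linarith)
    nlinarith

theorem abs_iteratedDeriv_sub_le {f g : ℝ → ℝ} {k : ℕ} {x : ℝ} (hf : ContDiffAt ℝ k f x)
    (hg : ContDiffAt ℝ k g x) (a b : ℝ) :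
    |iteratedDeriv k (fun t => f t - g t) x| ≤
      |iteratedDeriv k (fun t => f t - a) x| + |iteratedDeriv k (fun t => g t - b) x| + |a - b| := by
  have hsplit : (fun t => f t - g t) = fun t => ((f t - a) - (g t - b)) + (a - b) := by
    funext t; ring
  have hconst : |iteratedDeriv k (fun _ => a - b) x| ≤ |a - b| := by
    rw [iteratedDeriv_const]; split_ifs <;> simp
  rw [hsplit, iteratedDeriv_fun_add ((hf.sub contDiffAt_const).sub (hg.sub contDiffAt_const))
    contDiffAt_const, iteratedDeriv_fun_sub (hf.sub contDiffAt_const) (hg.sub contDiffAt_const)]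
  exact (abs_add_le _ _).trans (add_le_add (abs_sub _ _) hconst)

noncomputable def sechSqComp (F : ℝ → ℝ) (c t : ℝ) : ℝ := (1 - tanh (t * c) ^ 2) * F (tanh (t * c))

noncomputable def sechSqDeriv (F : ℝ → ℝ) (x : ℝ) : ℝ := -2 * x * F x + (1 - x ^ 2) * deriv F x

theorem hasDerivAt_sechSqComp {F : ℝ → ℝ} {c t : ℝ} (hF : DifferentiableAt ℝ F (tanh (t * c))) :
    HasDerivAt (sechSqComp F c) (c * sechSqComp (sechSqDeriv F) c t) t := by
  have hT := (hasDerivAt_tanh (t * c)).comp t (hasDerivAt_mul_const c)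
  refine ((hT.pow 2).const_sub 1 |>.mul (hF.hasDerivAt.comp t hT)).congr_deriv ?_
  simp only [sechSqComp, sechSqDeriv, Function.comp_apply, Pi.pow_apply]
  ring

theorem ContDiffOn.sechSqDeriv {F : ℝ → ℝ} (hF : ContDiffOn ℝ ∞ F (Ioi 0)) :
    ContDiffOn ℝ ∞ (sechSqDeriv F) (Ioi 0) :=
  ((contDiffOn_const.mul contDiffOn_id).mul hF).add
    ((contDiffOn_const.sub (contDiffOn_id.pow 2)).mul
      (hF.deriv_of_isOpen isOpen_Ioi (by simp)))

theorem iteratedDeriv_const_mul_sechSqComp {F : ℝ → ℝ} (hF : ContDiffOn ℝ ∞ F (Ioi 0)) (a : ℝ)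
    {c t : ℝ} (hc : 0 < c) (ht : 0 < t) (k : ℕ) :
    iteratedDeriv k (fun s => a * sechSqComp F c s) t =
      a * c ^ k * sechSqComp (sechSqDeriv^[k] F) c t := by
  induction k generalizing F a with
  | zero => simp
  | succ k ih =>
    have hderiv : deriv (fun s => a * sechSqComp F c s) =ᶠ[𝓝 t]
        fun s => a * c * sechSqComp (sechSqDeriv F) c s := by
      filter_upwards [Ioi_mem_nhds ht] with s hs
      have hFs : DifferentiableAt ℝ F (tanh (s * c)) :=
        (hF.differentiableOn (by simp)).differentiableAt
          (Ioi_mem_nhds (tanh_pos (mul_pos hs hc)))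
      rw [((hasDerivAt_sechSqComp hFs).const_mul a).deriv, mul_assoc]
    rw [iteratedDeriv_succ', hderiv.iteratedDeriv_eq, ih hF.sechSqDeriv,
      Function.iterate_succ_apply]
    ring

theorem contDiffAt_sqrt_mul_tanh {n : WithTop ℕ∞} {c t : ℝ} (hc : 0 < c) (ht : 0 < t) :
    ContDiffAt ℝ n (fun s => √(c * tanh (s * c))) t :=
  (contDiffAt_const.mul (contDiff_tanh.comp (contDiff_id.mul contDiff_const)).contDiffAt).sqrt
    (mul_pos hc (tanh_pos (mul_pos ht hc))).ne'

theorem sqrt_mul_tanh_sub_sqrt_eqOn {c : ℝ} (hc : 0 ≤ c) :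
    EqOn (fun t => √(c * tanh (t * c)) - √c)
      (fun t => -√c * sechSqComp (fun x => ((1 + √x) * (1 + x))⁻¹) c t) (Ici 0) := by
  intro t ht
  have hT : 0 ≤ tanh (t * c) := by simpa using tanh_strictMono.monotone (mul_nonneg ht hc)
  simp only [sechSqComp]
  rw [sqrt_mul hc]
  have := sq_sqrt hT
  field_simp
  linear_combination (√c + √c * tanh (t * c)) * this

theorem abs_sechSqComp_le {G : ℝ → ℝ} {M h₁ h c : ℝ} (hM : ∀ x ∈ Icc (tanh h₁) 1, ‖G x‖ ≤ M)
    (hh₁ : 0 ≤ h₁) (hh : h₁ ≤ h) (hc : 1 ≤ c) :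
    |sechSqComp G c h| ≤ 4 * exp (-(2 * h₁ * c)) * M := by
  set T := tanh (h * c)
  have hT : T ∈ Icc (tanh h₁) 1 := ⟨tanh_strictMono.monotone (by nlinarith), (tanh_lt_one _).le⟩
  have hsech : 1 - T ^ 2 ≤ 4 * exp (-(2 * h₁ * c)) :=
    (one_sub_tanh_sq_le _).trans
      (mul_le_mul_of_nonneg_left (exp_le_exp.2 (by nlinarith)) (by norm_num))
  rw [sechSqComp, abs_mul, abs_of_nonneg (sub_nonneg.2 (tanh_sq_lt_one _).le)]
  exact mul_le_mul hsech (hM T hT) (abs_nonneg _) (by positivity)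

theorem exists_abs_iteratedDeriv_sqrt_mul_tanh_sub_sqrt_le {h₁ : ℝ} (hh₁ : 0 < h₁) (k : ℕ) :
    ∃ D, 0 ≤ D ∧ ∀ h, h₁ ≤ h → ∀ c : ℝ, 1 ≤ c →
      |iteratedDeriv k (fun t => √(c * tanh (t * c)) - √c) h| ≤ D / √c := by
  set F : ℝ → ℝ := fun x => ((1 + √x) * (1 + x))⁻¹
  have hF : ContDiffOn ℝ ∞ F (Ioi 0) := fun x (hx : 0 < x) =>
    (((contDiffAt_const.add (contDiffAt_sqrt hx.ne')).mul
      (contDiffAt_const.add contDiffAt_id)).inv (by positivity)).contDiffWithinAt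
  have hG : ContDiffOn ℝ ∞ (sechSqDeriv^[k] F) (Ioi 0) :=
    Function.Iterate.rec (fun f => ContDiffOn ℝ ∞ f (Ioi 0)) hF (fun _ => .sechSqDeriv) k
  have hrange : Icc (tanh h₁) 1 ⊆ Ioi 0 := fun x hx => (tanh_pos hh₁).trans_le hx.1
  obtain ⟨M, hM⟩ := isCompact_Icc.exists_bound_of_continuousOn (hG.continuousOn.mono hrange)
  have hM0 : 0 ≤ M := (norm_nonneg _).trans (hM _ ⟨le_rfl, (tanh_lt_one h₁).le⟩)
  refine ⟨4 * M * ((k + 1)! / (2 * h₁) ^ (k + 1)), by positivity, fun h hh c hc => ?_⟩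
  have hc0 : 0 < c := one_pos.trans_le hc
  have hh0 : 0 < h := hh₁.trans_le hh
  rw [((sqrt_mul_tanh_sub_sqrt_eqOn hc0.le).eventuallyEq_of_mem
      (Ici_mem_nhds hh0)).iteratedDeriv_eq, iteratedDeriv_const_mul_sechSqComp hF _ hc0 hh0, abs_mul, abs_mul, abs_neg,
    abs_of_nonneg (sqrt_nonneg c), abs_of_nonneg (by positivity : 0 ≤ c ^ k)]
  calc √c * c ^ k * |sechSqComp (sechSqDeriv^[k] F) c h|
      ≤ √c * c ^ k * (4 * exp (-(2 * h₁ * c)) * M) := by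
        gcongr; exact abs_sechSqComp_le hM hh₁.le hh hc
    _ = 4 * M * (c ^ (k + 1) * exp (-(2 * h₁ * c))) / √c := by
        field_simp
        rw [sq_sqrt hc0.le]
        ring
    _ ≤ 4 * M * ((k + 1)! / (2 * h₁) ^ (k + 1)) / √c := by
        gcongr; exact pow_mul_exp_neg_mul_le (k + 1) (by positivity) hc0.le

/-- For every h₁ > 0 and k ∈ ℕ there is C_k > 0 (depending only on k and h₁) such that
|∂_h^k (√(j tanh(h j)) − √(j' tanh(h j')))| ≤ C_k |√j − √j'| for all h ≥ h₁ and j, j' ≥ 1. -/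
theorem freq_difference_derivatives_bound (h₁ : ℝ) (hh₁ : 0 < h₁) (k : ℕ) :
    ∃ C : ℝ, 0 < C ∧ ∀ h : ℝ, h₁ ≤ h → ∀ j j' : ℕ, 1 ≤ j → 1 ≤ j' →
      |iteratedDeriv k
          (fun t : ℝ => Real.sqrt ((j : ℝ) * Real.tanh (t * (j : ℝ))) -
            Real.sqrt ((j' : ℝ) * Real.tanh (t * (j' : ℝ)))) h| ≤
        C * |Real.sqrt j - Real.sqrt j'| := by
  obtain ⟨D, hD, hdefect⟩ := exists_abs_iteratedDeriv_sqrt_mul_tanh_sub_sqrt_le hh₁ k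
  refine ⟨1 + 6 * D, by positivity, fun h hh j j' hj hj' => ?_⟩
  rcases eq_or_ne j j' with rfl | hne
  · simp
  have hh0 : 0 < h := hh₁.trans_le hh
  have hdefect_le {m n : ℕ} (hm : 1 ≤ m) (hmn : m ≠ n) :
      |iteratedDeriv k (fun t => √(m * tanh (t * m)) - √m) h| ≤ 3 * D * |√(m : ℝ) - √n| := by
    refine (hdefect h hh m (by exact_mod_cast hm)).trans ?_
    rw [div_eq_mul_inv, mul_comm 3 D, mul_assoc]
    exact mul_le_mul_of_nonneg_left (inv_sqrt_le_three_mul_abs_sqrt_sub hm hmn) hD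
  calc _ ≤ _ := abs_iteratedDeriv_sub_le (contDiffAt_sqrt_mul_tanh (Nat.cast_pos.2 hj) hh0)
        (contDiffAt_sqrt_mul_tanh (Nat.cast_pos.2 hj') hh0) √j √j'
    _ ≤ 3 * D * |√(j : ℝ) - √j'| + 3 * D * |√(j : ℝ) - √j'| + |√(j : ℝ) - √j'| := by
        gcongr
        · exact hdefect_le hj hne
        · rw [abs_sub_comm (√(j : ℝ))]; exact hdefect_le hj' hne.symm
    _ = (1 + 6 * D) * |√(j : ℝ) - √j'| := by ring
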